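/- arXiv:2306.08104 — 2 statements merged into one kernel-verified Lean document; each statement's English description precedes it below -/
import Mathlib

section
/- Let n ≥ 1 and r ≥ 1, let S = ℂ[α_0,…,α_n] with the standard grading and 𝔪 = (α_0,…,α_n). For every homogeneous ideal J ⊆ S that is 𝔪-saturated and satisfies dim_ℂ (S/J)_k = r for all sufficiently large k, there exists a homogeneous ideal I ⊆ S with dim_ℂ (S/I)_k = min(dim_ℂ S_k, r) for every k ≥ 0 and with (I : 𝔪^∞) = J. -/
open MvPolynomial

noncomputable section

/-- The saturation `(I : B^∞) = {f ∈ S : f·B^k ⊆ I for some k ≥ 0}`, as a set. -/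
def satSet {R : Type*} [CommRing R] (I B : Ideal R) : Set R :=
  {x | ∃ k : ℕ, ∀ g ∈ B ^ k, x * g ∈ I}

/-- The degree-`k` graded piece `I_k = I ∩ S_k` of an ideal of `ℂ[α_0,…,α_n]`. -/
def idealPiece (n : ℕ) (I : Ideal (MvPolynomial (Fin (n + 1)) ℂ)) (k : ℕ) :
    Submodule ℂ (MvPolynomial (Fin (n + 1)) ℂ) :=
  Submodule.restrictScalars ℂ I ⊓ homogeneousSubmodule (Fin (n + 1)) ℂ k

/-- A homogeneous ideal: `I = ⊕_k I_k`. -/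
def IsHomog (n : ℕ) (I : Ideal (MvPolynomial (Fin (n + 1)) ℂ)) : Prop :=
  Submodule.restrictScalars ℂ I = ⨆ k : ℕ, idealPiece n I k

/-- The Hilbert function of `S/I`: `H_{S/I}(k) = dim S_k − dim I_k`. -/
def HF (n : ℕ) (I : Ideal (MvPolynomial (Fin (n + 1)) ℂ)) (k : ℕ) : ℕ :=
  Module.finrank ℂ ↥(homogeneousSubmodule (Fin (n + 1)) ℂ k) -
    Module.finrank ℂ ↥(idealPiece n I k)

/-- The irrelevant maximal ideal `𝔪 = (α_0,…,α_n)`. -/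
def irrel (n : ℕ) : Ideal (MvPolynomial (Fin (n + 1)) ℂ) :=
  Ideal.span (Set.range (X : Fin (n + 1) → MvPolynomial (Fin (n + 1)) ℂ))

/-!
Since `J` is saturated, no associated prime of `S/J` contains `𝔪`, so a generic linear form `ℓ`
is a nonzerodivisor on `S/J` (`ℂ` is infinite). Multiplication by `ℓ` embeds `(S/J)_k` into
`(S/J)_{k+1}`, hence the Hilbert function `H_J` is nondecreasing and bounded by `r`.
In degree `k` we impose on `J_k` vanishing at the first `c_k = min(dim S_k, r) - H_J(k)` points of
one generic sequence of points; generic points give independent conditions. When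
`dim S_k ≤ r` this kills `J_k`, and once `dim S_k > r` the number `c_k = r - H_J(k)` only
decreases with `k`, so the pieces are stable under multiplication by `S` and form an ideal `I` with
Hilbert function `min(dim S_k, r)`. As `c_k = 0` for `k ≫ 0`, `I` agrees with `J` in large degrees
and therefore has saturation `J`.
-/

open Submodule
open Module (finrank)

theorem finrank_inf_ker_add_one {K M : Type*} [Field K] [AddCommGroup M] [Module K M]
    (W : Submodule K M) [FiniteDimensional K W] (φ : M →ₗ[K] K) (h : ¬ W ≤ LinearMap.ker φ) :
    finrank K ↥(W ⊓ LinearMap.ker φ) + 1 = finrank K W := by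
  have hsurj : LinearMap.range (φ.domRestrict W) = ⊤ := by
    obtain ⟨w, hw, hφw⟩ := SetLike.not_le_iff_exists.mp h
    refine eq_top_iff.mpr fun c _ => ⟨(c / φ w) • ⟨w, hw⟩, ?_⟩
    simp [div_mul_cancel₀ c hφw]
  have hker : comap W.subtype (W ⊓ LinearMap.ker φ) = LinearMap.ker (φ.domRestrict W) := by
    rw [LinearMap.ker_domRestrict, comap_inf, comap_subtype_self, top_inf_eq]
  have := LinearMap.finrank_range_add_finrank_ker (φ.domRestrict W)
  rw [hsurj, finrank_top, Module.finrank_self, ← hker,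
    (comapSubtypeEquivOfLe inf_le_left).finrank_eq] at this
  omega

theorem finrank_quotient_comap_subtype {K M : Type*} [Field K] [AddCommGroup M] [Module K M]
    (W P : Submodule K M) [FiniteDimensional K W] :
    finrank K (W ⧸ P.comap W.subtype) = finrank K W - finrank K ↥(P ⊓ W) := by
  have hcomap : (P ⊓ W).comap W.subtype = P.comap W.subtype := by
    rw [comap_inf, comap_subtype_self, inf_top_eq]
  rw [finrank_quotient, ← hcomap, (comapSubtypeEquivOfLe inf_le_right).finrank_eq]

section Graded

variable {σ R : Type*} [CommSemiring R]

instance {K : Type*} [Field K] [Finite σ] (k : ℕ) :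
    FiniteDimensional K (homogeneousSubmodule σ K k) :=
  Submodule.finiteDimensional_of_le fun _ hp => (mem_restrictTotalDegree _ _ _).mpr
    (IsHomogeneous.totalDegree_le hp)

theorem homogeneousComponent_mul_mem (V : ℕ → Submodule R (MvPolynomial σ R))
    {f g : MvPolynomial σ R}
    (H : ∀ i j, homogeneousComponent i f * homogeneousComponent j g ∈ V (i + j)) (m : ℕ) :
    homogeneousComponent m (f * g) ∈ V m := by
  rw [← sum_homogeneousComponent f, ← sum_homogeneousComponent g, Finset.sum_mul_sum, map_sum]
  refine sum_mem fun i _ => ?_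
  rw [map_sum]
  refine sum_mem fun j _ => ?_
  rw [homogeneousComponent_of_mem
    ((homogeneousComponent_isHomogeneous i f).mul (homogeneousComponent_isHomogeneous j g))]
  split_ifs with h
  · exact h ▸ H i j
  · exact zero_mem _

def idealOfPieces (V : ℕ → Submodule R (MvPolynomial σ R))
    (hV : ∀ j k g f, g ∈ homogeneousSubmodule σ R j → f ∈ V k → g * f ∈ V (j + k)) :
    Ideal (MvPolynomial σ R) where
  carrier := {f | ∀ m, homogeneousComponent m f ∈ V m}
  add_mem' hf hg m := by rw [map_add]; exact add_mem (hf m) (hg m)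
  zero_mem' m := by rw [map_zero]; exact zero_mem _
  smul_mem' g _ hf :=
    homogeneousComponent_mul_mem V fun i j => hV i j _ _ (homogeneousComponent_mem i g) (hf j)

section idealOfPieces

variable {V : ℕ → Submodule R (MvPolynomial σ R)}
  {hV : ∀ j k g f, g ∈ homogeneousSubmodule σ R j → f ∈ V k → g * f ∈ V (j + k)}

theorem restrictScalars_idealOfPieces_inf (hVS : ∀ k, V k ≤ homogeneousSubmodule σ R k) (k : ℕ) :
    restrictScalars R (idealOfPieces V hV) ⊓ homogeneousSubmodule σ R k = V k := by
  refine le_antisymm ?_ fun f hf => ⟨fun m => ?_, hVS k hf⟩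
  · rintro f ⟨hf, hfk⟩
    simpa [homogeneousComponent_of_mem hfk] using hf k
  · rw [homogeneousComponent_of_mem (hVS k hf)]
    split_ifs with h
    · exact h ▸ hf
    · exact zero_mem _

theorem restrictScalars_idealOfPieces_eq_iSup (hVS : ∀ k, V k ≤ homogeneousSubmodule σ R k) :
    restrictScalars R (idealOfPieces V hV) =
      ⨆ k, restrictScalars R (idealOfPieces V hV) ⊓ homogeneousSubmodule σ R k := by
  refine le_antisymm (fun f hf => ?_) (iSup_le fun k => inf_le_left)
  rw [← sum_homogeneousComponent f]
  refine sum_mem fun m _ => mem_iSup_of_mem m ?_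
  rw [restrictScalars_idealOfPieces_inf hVS]
  exact hf m

theorem idealOfPieces_le {J : Ideal (MvPolynomial σ R)} (hVJ : ∀ k, V k ≤ restrictScalars R J) :
    idealOfPieces V hV ≤ J := fun f hf =>
  sum_homogeneousComponent f ▸ sum_mem fun m _ => hVJ m (hf m)

end idealOfPieces

theorem span_X_pow_le_span_homogeneousSubmodule (d : ℕ) :
    Ideal.span (Set.range (X : σ → MvPolynomial σ R)) ^ d ≤
      Ideal.span (homogeneousSubmodule σ R d) := by
  induction d with
  | zero =>
    rw [pow_zero, Ideal.one_eq_top, top_le_iff, Ideal.eq_top_iff_one]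
    exact Ideal.subset_span (isHomogeneous_one σ R)
  | succ d ih =>
    rw [pow_succ]
    refine (Ideal.mul_mono ih (Ideal.span_mono (t := homogeneousSubmodule σ R 1) ?_)).trans ?_
    · rintro _ ⟨i, rfl⟩
      exact isHomogeneous_X R i
    · rw [Ideal.span_mul_span']
      refine Ideal.span_mono ?_
      rintro _ ⟨f, hf, g, hg, rfl⟩
      exact IsHomogeneous.mul hf hg

end Graded

theorem satSet_eq_of_le_of_inf_homogeneousSubmodule_le {σ R : Type*} [CommRing R]
    {I J : Ideal (MvPolynomial σ R)} {N : ℕ}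
    (hJ : restrictScalars R J = ⨆ k, restrictScalars R J ⊓ homogeneousSubmodule σ R k)
    (hIJ : I ≤ J)
    (hJI : ∀ k, N ≤ k →
      restrictScalars R J ⊓ homogeneousSubmodule σ R k ≤ restrictScalars R I)
    (hsat : satSet J (Ideal.span (Set.range X)) = (J : Set (MvPolynomial σ R))) :
    satSet I (Ideal.span (Set.range X)) = (J : Set (MvPolynomial σ R)) := by
  refine subset_antisymm (fun x ⟨k, hk⟩ => hsat ▸ ⟨k, fun g hg => hIJ (hk g hg)⟩) fun x hx => ?_
  have hhom : ∀ g ∈ homogeneousSubmodule σ R N, x * g ∈ I := by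
    intro g hg
    suffices restrictScalars R J ≤ (restrictScalars R I).comap (LinearMap.mulRight R g) from
      this hx
    rw [hJ]
    refine iSup_le fun k y ⟨hyJ, hyk⟩ => hJI (k + N) (Nat.le_add_left N k) ⟨?_, ?_⟩
    · exact J.mul_mem_right g hyJ
    · exact IsHomogeneous.mul hyk hg
  have hspan : Ideal.span (homogeneousSubmodule σ R N) ≤ I.colon {x} :=
    Ideal.span_le.mpr fun g hg =>
      mem_colon_singleton.mpr (by rw [smul_eq_mul, mul_comm]; exact hhom g hg)
  refine ⟨N, fun g hg => ?_⟩
  rw [mul_comm, ← smul_eq_mul]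
  exact mem_colon_singleton.mp (hspan (span_X_pow_le_span_homogeneousSubmodule N hg))

section Regular

variable {R : Type*} [CommRing R] [IsNoetherianRing R] {J : Ideal R}

theorem not_le_of_mem_associatedPrimes_of_satSet_eq {B P : Ideal R}
    (hsat : satSet J B = (J : Set R)) (hP : P ∈ associatedPrimes R (R ⧸ J)) : ¬ B ≤ P := by
  obtain ⟨hprime, y, rfl⟩ := isAssociatedPrime_iff.mp hP
  obtain ⟨y, rfl⟩ := Ideal.Quotient.mk_surjective y
  intro hB
  have hyJ : y ∈ J := by
    rw [← SetLike.mem_coe, ← hsat]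
    refine ⟨1, fun b hb => ?_⟩
    have := mem_colon_singleton.mp (hB (pow_one B ▸ hb))
    rw [Submodule.mem_bot, Algebra.smul_def, Ideal.Quotient.algebraMap_eq, ← map_mul,
      Ideal.Quotient.eq_zero_iff_mem, mul_comm] at this
    exact this
  apply hprime.ne_top
  rw [Ideal.eq_top_iff_one, mem_colon_singleton, one_smul, Submodule.mem_bot,
    Ideal.Quotient.eq_zero_iff_mem]
  exact hyJ

theorem mem_of_mul_mem_of_forall_notMem_associatedPrimes {x f : R}
    (hx : ∀ P ∈ associatedPrimes R (R ⧸ J), x ∉ P) (hxf : x * f ∈ J) : f ∈ J := by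
  by_contra hf
  have : x ∈ ⋃ P ∈ associatedPrimes R (R ⧸ J), (P : Set R) := by
    rw [biUnion_associatedPrimes_eq_zero_divisors]
    refine ⟨Ideal.Quotient.mk J f, ?_, ?_⟩
    · rwa [Ne, Ideal.Quotient.eq_zero_iff_mem]
    · rwa [Algebra.smul_def, Ideal.Quotient.algebraMap_eq, ← map_mul,
        Ideal.Quotient.eq_zero_iff_mem]
  obtain ⟨P, hP, hxP⟩ := Set.mem_iUnion₂.mp this
  exact hx P hP hxP

end Regular

section Linear

variable {σ K : Type*} [Field K] [Infinite K]

theorem exists_mem_homogeneousSubmodule_one_forall_notMem {s : Set (Ideal (MvPolynomial σ K))}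
    (hs : s.Finite) (hX : ∀ P ∈ s, ¬ Ideal.span (Set.range X) ≤ P) :
    ∃ ℓ ∈ homogeneousSubmodule σ K 1, ∀ P ∈ s, ℓ ∉ P := by
  have := hs.to_subtype
  let L (P : s) : Submodule K (homogeneousSubmodule σ K 1) :=
    (restrictScalars K P.1).comap (homogeneousSubmodule σ K 1).subtype
  have hL (P : s) : L P ≠ ⊤ := fun htop => hX P P.2 <| Ideal.span_le.mpr <| by
    rintro _ ⟨i, rfl⟩
    exact (htop.ge (mem_top : (⟨X i, isHomogeneous_X K i⟩ : homogeneousSubmodule σ K 1) ∈ ⊤) :)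
  obtain ⟨ℓ, hℓ⟩ := exists_forall_notMem_of_forall_ne_top L hL
  exact ⟨ℓ, ℓ.2, fun P hP => hℓ ⟨P, hP⟩⟩

theorem exists_linear_nonzerodivisor_of_satSet_eq [Finite σ] {J : Ideal (MvPolynomial σ K)}
    (hsat : satSet J (Ideal.span (Set.range X)) = (J : Set (MvPolynomial σ K))) :
    ∃ ℓ ∈ homogeneousSubmodule σ K 1, ∀ f, ℓ * f ∈ J → f ∈ J := by
  obtain ⟨ℓ, hℓ, hℓP⟩ := exists_mem_homogeneousSubmodule_one_forall_notMem
    (associatedPrimes.finite _ _) fun P hP => not_le_of_mem_associatedPrimes_of_satSet_eq hsat hP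
  exact ⟨ℓ, hℓ, fun f => mem_of_mul_mem_of_forall_notMem_associatedPrimes hℓP⟩

end Linear

section Points

variable {σ K : Type*} [Field K]

theorem exists_eval_ne_zero_forall [Infinite K] {ι : Type*} (s : Finset ι)
    {f : ι → MvPolynomial σ K} (hf : ∀ i ∈ s, f i ≠ 0) :
    ∃ q : σ → K, ∀ i ∈ s, eval q (f i) ≠ 0 := by
  obtain ⟨q, hq⟩ : ∃ q, eval q (∏ i ∈ s, f i) ≠ 0 := by
    by_contra! h
    exact Finset.prod_ne_zero_iff.mpr hf (MvPolynomial.funext fun q => by simp [h q])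
  rw [map_prod] at hq
  exact ⟨q, fun i hi => Finset.prod_ne_zero_iff.mp hq i hi⟩

theorem restrictScalars_vanishingIdeal_singleton (q : σ → K) :
    restrictScalars K (vanishingIdeal K {q}) = LinearMap.ker (aeval q).toLinearMap := by
  ext f
  simp

theorem exists_point_finrank_inf_vanishingIdeal_add_one [Infinite K] {ι : Type*} (s : Finset ι)
    (W : ι → Submodule K (MvPolynomial σ K)) [∀ i, FiniteDimensional K (W i)]
    (hW : ∀ i ∈ s, W i ≠ ⊥) :
    ∃ q : σ → K, ∀ i ∈ s,
      finrank K ↥(W i ⊓ restrictScalars K (vanishingIdeal K {q})) + 1 = finrank K (W i) := by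
  choose! u hu hu0 using fun i hi => exists_mem_ne_zero_of_ne_bot (hW i hi)
  obtain ⟨q, hq⟩ := exists_eval_ne_zero_forall s hu0
  refine ⟨q, fun i hi => ?_⟩
  rw [restrictScalars_vanishingIdeal_singleton]
  refine finrank_inf_ker_add_one _ _ fun hle => hq i hi ?_
  simpa using hle (hu i hi)

theorem vanishingIdeal_image_Iio_zero (p : ℕ → σ → K) :
    vanishingIdeal K (p '' Set.Iio 0) = ⊤ := by
  rw [Set.Iio_zero_eq_empty, Set.image_empty, vanishingIdeal_empty]

theorem vanishingIdeal_image_Iio_succ (p : ℕ → σ → K) (m : ℕ) :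
    vanishingIdeal K (p '' Set.Iio (m + 1)) =
      vanishingIdeal K (p '' Set.Iio m) ⊓ vanishingIdeal K {p m} := by
  ext f
  simp [Nat.le_iff_lt_or_eq, or_imp, forall_and]

theorem exists_points_finrank_inf_vanishingIdeal_of_le [Infinite K]
    (W : ℕ → Submodule K (MvPolynomial σ K)) [∀ k, FiniteDimensional K (W k)] {c : ℕ → ℕ}
    (hc : ∀ k, c k ≤ finrank K (W k)) {N : ℕ} (hN : ∀ k, N ≤ k → c k = 0) (m : ℕ) :
    ∃ p : ℕ → σ → K, ∀ k, ∀ i ≤ min m (c k),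
      finrank K ↥(W k ⊓ restrictScalars K (vanishingIdeal K (p '' Set.Iio i))) =
        finrank K (W k) - i := by
  induction m with
  | zero =>
    refine ⟨fun _ => 0, fun k i hi => ?_⟩
    obtain rfl : i = 0 := by omega
    rw [vanishingIdeal_image_Iio_zero, restrictScalars_top, inf_top_eq, Nat.sub_zero]
  | succ m ih =>
    obtain ⟨p, hp⟩ := ih
    let D := (Finset.range N).filter (m < c ·)
    have hD (k) (hk : m < c k) : k ∈ D := by
      refine Finset.mem_filter.mpr ⟨Finset.mem_range.mpr ?_, hk⟩
      by_contra hkN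
      have := hN k (not_lt.mp hkN)
      omega
    have hne (k) (hk : k ∈ D) :
        W k ⊓ restrictScalars K (vanishingIdeal K (p '' Set.Iio m)) ≠ ⊥ := by
      intro hbot
      have hm := (Finset.mem_filter.mp hk).2
      have := hp k m (le_min le_rfl hm.le)
      rw [hbot, finrank_bot] at this
      have := hc k
      omega
    obtain ⟨q, hq⟩ := exists_point_finrank_inf_vanishingIdeal_add_one D _ hne
    refine ⟨Function.update p m q, fun k i hi => ?_⟩
    have himage (j) (hj : j ≤ m) : Function.update p m q '' Set.Iio j = p '' Set.Iio j :=
      Set.image_congr fun a ha => Function.update_of_ne (by simp at ha; omega) _ _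
    rcases (le_min_iff.mp hi).1.lt_or_eq with hlt | rfl
    · rw [himage i (by omega)]
      exact hp k i (by omega)
    · rw [vanishingIdeal_image_Iio_succ, himage m le_rfl, Function.update_self,
        restrictScalars_inf, ← inf_assoc]
      have := hq k (hD k (by omega))
      have := hp k m (by omega)
      omega

theorem exists_points_finrank_inf_vanishingIdeal [Infinite K]
    (W : ℕ → Submodule K (MvPolynomial σ K)) [∀ k, FiniteDimensional K (W k)] {c : ℕ → ℕ}
    (hc : ∀ k, c k ≤ finrank K (W k)) {N : ℕ} (hN : ∀ k, N ≤ k → c k = 0) :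
    ∃ p : ℕ → σ → K, ∀ k,
      finrank K ↥(W k ⊓ restrictScalars K (vanishingIdeal K (p '' Set.Iio (c k)))) =
        finrank K (W k) - c k := by
  obtain ⟨p, hp⟩ := exists_points_finrank_inf_vanishingIdeal_of_le W hc hN ((Finset.range N).sup c)
  refine ⟨p, fun k => hp k (c k) (le_min ?_ le_rfl)⟩
  by_cases hk : k < N
  · exact Finset.le_sup (Finset.mem_range.mpr hk)
  · simp [hN k (not_lt.mp hk)]

theorem mul_mem_inf_vanishingIdeal_image_Iio {J : Ideal (MvPolynomial σ K)} {p : ℕ → σ → K}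
    {a b j k : ℕ} (hba : b ≤ a) {g f : MvPolynomial σ K} (hg : g ∈ homogeneousSubmodule σ K j)
    (hf : f ∈ restrictScalars K J ⊓ homogeneousSubmodule σ K k ⊓
      restrictScalars K (vanishingIdeal K (p '' Set.Iio a))) :
    g * f ∈ restrictScalars K J ⊓ homogeneousSubmodule σ K (j + k) ⊓
      restrictScalars K (vanishingIdeal K (p '' Set.Iio b)) :=
  ⟨⟨J.mul_mem_left g hf.1.1, IsHomogeneous.mul hg hf.1.2⟩, vanishingIdeal_anti_mono
    (Set.image_mono (Set.Iio_subset_Iio hba)) (Ideal.mul_mem_left _ g hf.2)⟩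

end Points

section HilbertFunction

variable {n : ℕ} {J : Ideal (MvPolynomial (Fin (n + 1)) ℂ)}

instance (k : ℕ) : FiniteDimensional ℂ (idealPiece n J k) :=
  Submodule.finiteDimensional_inf_right _ _

theorem HF_eq_finrank_quotient (k : ℕ) :
    HF n J k = finrank ℂ (homogeneousSubmodule (Fin (n + 1)) ℂ k ⧸
      (restrictScalars ℂ J).comap (homogeneousSubmodule (Fin (n + 1)) ℂ k).subtype) :=
  (finrank_quotient_comap_subtype _ _).symm

theorem HF_le_HF_add {ℓ : MvPolynomial (Fin (n + 1)) ℂ} {d : ℕ}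
    (hℓ : ℓ ∈ homogeneousSubmodule (Fin (n + 1)) ℂ d) (hJ : ∀ f, ℓ * f ∈ J → f ∈ J) (k : ℕ) :
    HF n J k ≤ HF n J (k + d) := by
  let μ := (LinearMap.mulLeft ℂ ℓ).restrict (p := homogeneousSubmodule (Fin (n + 1)) ℂ k)
    (q := homogeneousSubmodule (Fin (n + 1)) ℂ (k + d))
    fun f hf => by rw [mem_homogeneousSubmodule, add_comm k d]; exact IsHomogeneous.mul hℓ hf
  have hμ : ((restrictScalars ℂ J).comap
      (homogeneousSubmodule (Fin (n + 1)) ℂ (k + d)).subtype).comap μ =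
        (restrictScalars ℂ J).comap (homogeneousSubmodule (Fin (n + 1)) ℂ k).subtype :=
    ext fun f => ⟨hJ f, J.mul_mem_left ℓ⟩
  rw [HF_eq_finrank_quotient, HF_eq_finrank_quotient]
  refine LinearMap.finrank_le_finrank_of_injective (f := mapQ _ _ μ hμ.ge) ?_
  rw [← LinearMap.ker_eq_bot, ker_mapQ, hμ, mkQ_map_self]

theorem monotone_HF (hsat : satSet J (irrel n) = (J : Set (MvPolynomial (Fin (n + 1)) ℂ))) :
    Monotone (HF n J) := by
  obtain ⟨ℓ, hℓ, hJ⟩ := exists_linear_nonzerodivisor_of_satSet_eq hsat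
  exact monotone_nat_of_le_succ (HF_le_HF_add hℓ hJ)

theorem monotone_finrank_homogeneousSubmodule :
    Monotone fun k => finrank ℂ (homogeneousSubmodule (Fin (n + 1)) ℂ k) := by
  have hbot (k : ℕ) : HF n ⊥ k = finrank ℂ (homogeneousSubmodule (Fin (n + 1)) ℂ k) := by
    rw [HF, idealPiece, restrictScalars_bot, bot_inf_eq, finrank_bot, Nat.sub_zero]
  refine monotone_nat_of_le_succ fun k => ?_
  rw [← hbot, ← hbot]
  exact HF_le_HF_add (isHomogeneous_X ℂ 0) (fun f hf => by simpa [X_ne_zero] using hf) k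

end HilbertFunction

/-- The number of linear conditions to impose on `J_k` to raise `dim (S/J)_k` to
`min (dim S_k) r`. -/
def deficiency (n r : ℕ) (J : Ideal (MvPolynomial (Fin (n + 1)) ℂ)) (k : ℕ) : ℕ :=
  min (finrank ℂ (homogeneousSubmodule (Fin (n + 1)) ℂ k)) r - HF n J k

section Deficiency

variable {n r : ℕ} {J : Ideal (MvPolynomial (Fin (n + 1)) ℂ)}

theorem finrank_idealPiece_le (k : ℕ) :
    finrank ℂ (idealPiece n J k) ≤ finrank ℂ (homogeneousSubmodule (Fin (n + 1)) ℂ k) :=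
  finrank_mono inf_le_right

theorem deficiency_le_finrank_idealPiece (k : ℕ) :
    deficiency n r J k ≤ finrank ℂ (idealPiece n J k) := by
  have := finrank_idealPiece_le (J := J) k
  unfold deficiency HF
  omega

theorem deficiency_eq_zero {k : ℕ} (h : HF n J k = r) : deficiency n r J k = 0 := by
  have := finrank_idealPiece_le (J := J) k
  unfold deficiency HF at *
  omega

theorem deficiency_eq_finrank_idealPiece {k : ℕ}
    (hk : finrank ℂ (homogeneousSubmodule (Fin (n + 1)) ℂ k) ≤ r) :
    deficiency n r J k = finrank ℂ (idealPiece n J k) := by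
  have := finrank_idealPiece_le (J := J) k
  unfold deficiency HF
  omega

theorem deficiency_le_deficiency (hmono : Monotone (HF n J)) {k l : ℕ} (hkl : k ≤ l)
    (hl : HF n J l ≤ r) (hk : r < finrank ℂ (homogeneousSubmodule (Fin (n + 1)) ℂ k)) :
    deficiency n r J l ≤ deficiency n r J k := by
  have := hmono hkl
  have : finrank ℂ (homogeneousSubmodule (Fin (n + 1)) ℂ k) ≤
      finrank ℂ (homogeneousSubmodule (Fin (n + 1)) ℂ l) :=
    monotone_finrank_homogeneousSubmodule hkl
  unfold deficiency
  omega

theorem finrank_sub_deficiency {k : ℕ} (hk : HF n J k ≤ r) :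
    finrank ℂ (homogeneousSubmodule (Fin (n + 1)) ℂ k) -
        (finrank ℂ (idealPiece n J k) - deficiency n r J k) =
      min (finrank ℂ (homogeneousSubmodule (Fin (n + 1)) ℂ k)) r := by
  have := finrank_idealPiece_le (J := J) k
  unfold deficiency HF at *
  omega

end Deficiency

theorem exists_pieces_finrank_eq_min {n r N : ℕ} {J : Ideal (MvPolynomial (Fin (n + 1)) ℂ)}
    (hmono : Monotone (HF n J)) (hN : ∀ k, N ≤ k → HF n J k = r) :
    ∃ V : ℕ → Submodule ℂ (MvPolynomial (Fin (n + 1)) ℂ),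
      (∀ k, V k ≤ idealPiece n J k) ∧ (∀ k, N ≤ k → V k = idealPiece n J k) ∧
      (∀ k, finrank ℂ (homogeneousSubmodule (Fin (n + 1)) ℂ k) - finrank ℂ (V k) =
        min (finrank ℂ (homogeneousSubmodule (Fin (n + 1)) ℂ k)) r) ∧
      ∀ j k g f, g ∈ homogeneousSubmodule (Fin (n + 1)) ℂ j → f ∈ V k → g * f ∈ V (j + k) := by
  have hHFr (k : ℕ) : HF n J k ≤ r :=
    (hmono (le_max_left k N)).trans (hN _ (le_max_right k N)).le
  obtain ⟨p, hp⟩ := exists_points_finrank_inf_vanishingIdeal (idealPiece n J)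
    deficiency_le_finrank_idealPiece fun k hk => deficiency_eq_zero (hN k hk)
  refine ⟨fun k => idealPiece n J k ⊓
      restrictScalars ℂ (vanishingIdeal ℂ (p '' Set.Iio (deficiency n r J k))),
    fun k => inf_le_left, fun k hk => ?_, fun k => ?_, ?_⟩
  · show idealPiece n J k ⊓ _ = _
    rw [deficiency_eq_zero (hN k hk), vanishingIdeal_image_Iio_zero, restrictScalars_top,
      inf_top_eq]
  · show _ - finrank ℂ ↥(idealPiece n J k ⊓ _) = _
    rw [hp k, finrank_sub_deficiency (hHFr k)]
  · intro j k g f hg (hf : f ∈ idealPiece n J k ⊓ _)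
    by_cases hk : finrank ℂ (homogeneousSubmodule (Fin (n + 1)) ℂ k) ≤ r
    · have hbot : idealPiece n J k ⊓
          restrictScalars ℂ (vanishingIdeal ℂ (p '' Set.Iio (deficiency n r J k))) = ⊥ :=
        finrank_eq_zero.mp (by rw [hp k, deficiency_eq_finrank_idealPiece hk, Nat.sub_self])
      have hf0 : f = 0 := (mem_bot ℂ).mp (hbot ▸ hf)
      rw [hf0, mul_zero]
      exact zero_mem _
    · exact mul_mem_inf_vanishingIdeal_image_Iio (deficiency_le_deficiency hmono
        (Nat.le_add_left k j) (hHFr _) (not_le.mp hk)) hg hf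

theorem surjectivity_onto_hilbert_scheme_general (n r : ℕ)
    (J : Ideal (MvPolynomial (Fin (n + 1)) ℂ))
    (hJhom : IsHomog n J)
    (hJsat : satSet J (irrel n) = (J : Set (MvPolynomial (Fin (n + 1)) ℂ)))
    (hJr : ∃ N : ℕ, ∀ k, N ≤ k → HF n J k = r) :
    ∃ I : Ideal (MvPolynomial (Fin (n + 1)) ℂ),
      IsHomog n I ∧
      (∀ k : ℕ, HF n I k = min (Module.finrank ℂ ↥(homogeneousSubmodule (Fin (n + 1)) ℂ k)) r) ∧
      satSet I (irrel n) = (J : Set (MvPolynomial (Fin (n + 1)) ℂ)) := by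
  obtain ⟨N, hN⟩ := hJr
  obtain ⟨V, hVJ, hVN, hVdim, hVmul⟩ := exists_pieces_finrank_eq_min (monotone_HF hJsat) hN
  have hVS (k : ℕ) : V k ≤ homogeneousSubmodule (Fin (n + 1)) ℂ k := (hVJ k).trans inf_le_right
  have hpiece : ∀ k, idealPiece n (idealOfPieces V hVmul) k = V k :=
    restrictScalars_idealOfPieces_inf hVS
  refine ⟨idealOfPieces V hVmul, restrictScalars_idealOfPieces_eq_iSup hVS,
    fun k => by rw [HF, hpiece, hVdim], ?_⟩
  exact satSet_eq_of_le_of_inf_homogeneousSubmodule_le (N := N) hJhom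
    (idealOfPieces_le fun k => (hVJ k).trans inf_le_left)
    (fun k hk => (hVN k hk).ge.trans ((hpiece k).ge.trans inf_le_left)) hJsat

/-- For every `𝔪`-saturated homogeneous ideal `J` with `dim (S/J)_k = r` for `k ≫ 0` there is a
homogeneous ideal `I` with `dim (S/I)_k = min(dim S_k, r)` for all `k` and `(I : 𝔪^∞) = J`. -/
theorem surjectivity_onto_hilbert_scheme (n r : ℕ) (hn : 1 ≤ n) (hr : 1 ≤ r)
    (J : Ideal (MvPolynomial (Fin (n + 1)) ℂ))
    (hJhom : IsHomog n J)
    (hJsat : satSet J (irrel n) = (J : Set (MvPolynomial (Fin (n + 1)) ℂ)))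
    (hJr : ∃ N : ℕ, ∀ k, N ≤ k → HF n J k = r) :
    ∃ I : Ideal (MvPolynomial (Fin (n + 1)) ℂ),
      IsHomog n I ∧
      (∀ k : ℕ, HF n I k = min (Module.finrank ℂ ↥(homogeneousSubmodule (Fin (n + 1)) ℂ k)) r) ∧
      satSet I (irrel n) = (J : Set (MvPolynomial (Fin (n + 1)) ℂ)) :=
  surjectivity_onto_hilbert_scheme_general n r J hJhom hJsat hJr
end
end

section
/- Let n ≥ 2 and r ≥ 4, and let S = ℂ[α_0,…,α_n] with the standard grading and 𝔪 = (α_0,…,α_n). Then there exists a homogeneous ideal I ⊆ S such that dim_ℂ (S/I)_k = min(dim_ℂ S_k, r) for every k ≥ 0, the saturation (I : 𝔪^∞) equals (α_0, …, α_{n−2}, α_{n−1}^r), and α_0^{r−2} ∉ I. -/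
open MvPolynomial

noncomputable section

/-!
`I` is a monomial ideal, given by its set of standard monomials (those not in `I`), which has to be
closed under division. Below the first degree `d` with `dim S_d > r` (and `d ≤ r - 2` because
`n ≥ 2`, `r ≥ 4`) every monomial is standard. In degrees `k ≥ r - 1` the standard monomials are the
`r` monomials `α_{n-1}^j α_n^{k-j}`, `j < r`, not in `J = (α_0, …, α_{n-2}, α_{n-1}^r)`; this
forces `(I : 𝔪^∞) = J`. In a degree `d ≤ k ≤ r - 2` they are the `k + 1` monomials of degree `k`
not in `J`, `α_0^k`, and the `u α_n^{k-d}` for `u` among the first `r - 2 - k` entries of a fixed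
list of the degree-`d` monomials of `J` other than `α_0^d`. Listing these by decreasing exponent
of `α_n` keeps every such set closed under division, and `α_0^{r-2}` is standard by construction.
-/

namespace NonslipIdeal

open Finset Finsupp

open scoped Classical

section Monomial

variable {σ R : Type*} [CommRing R]

lemma degree_erase_add (a : σ →₀ ℕ) (i : σ) : (a.erase i).degree + a i = a.degree := by
  conv_rhs => rw [← single_add_erase i a]
  rw [map_add, degree_single, add_comm]

lemma eq_of_le_of_degree_eq {a b : σ →₀ ℕ} (hab : a ≤ b) (h : a.degree = b.degree) : a = b := by
  obtain ⟨c, rfl⟩ := le_iff_exists_add.1 hab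
  rw [map_add, left_eq_add, degree_eq_zero_iff] at h
  rw [h, add_zero]

lemma mem_restrictSupportIdeal {s : Set (σ →₀ ℕ)} {hs : IsUpperSet s} {f : MvPolynomial σ R} :
    f ∈ restrictSupportIdeal R s hs ↔ ↑f.support ⊆ s :=
  Iff.rfl

lemma span_monomial_image_eq_restrictSupportIdeal (G : Set (σ →₀ ℕ)) :
    Ideal.span ((monomial · (1 : R)) '' G) =
      restrictSupportIdeal R (upperClosure G : Set (σ →₀ ℕ)) (upperClosure G).upper := by
  ext f
  rw [mem_ideal_span_monomial_image, mem_restrictSupportIdeal]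
  simp [Set.subset_def, mem_upperClosure]

/-- A power of one variable detects the saturation, and `𝔪^N` pushes every monomial into the
degrees where `U` and `V` agree. -/
theorem satSet_restrictSupportIdeal {U V : Set (σ →₀ ℕ)} (hU : IsUpperSet U) (hV : IsUpperSet V)
    (N : ℕ) (x : σ) (hUV : ∀ a, N ≤ a.degree → (a ∈ U ↔ a ∈ V))
    (hVx : ∀ a j, a + single x j ∈ V → a ∈ V) :
    satSet (restrictSupportIdeal R U hU) (idealOfVars σ R) = restrictSupportIdeal R V hV := by
  ext f
  change (∃ k, ∀ g ∈ idealOfVars σ R ^ k, f * g ∈ restrictSupportIdeal R U hU) ↔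
    f ∈ restrictSupportIdeal R V hV
  rw [mem_restrictSupportIdeal]
  constructor
  · rintro ⟨k, hk⟩ a ha
    have hfX : f * X x ^ (k + N) ∈ restrictSupportIdeal R U hU := by
      rw [pow_add, ← mul_assoc]
      exact Ideal.mul_mem_right _ _
        (hk _ (Ideal.pow_mem_pow (Ideal.subset_span (Set.mem_range_self x)) k))
    have haU : a + single x (k + N) ∈ U := (mem_restrictSupportIdeal.1 hfX) <| by
      rw [X_pow_eq_monomial, Finset.mem_coe, MvPolynomial.mem_support_iff, coeff_mul_monomial,
        mul_one]
      exact MvPolynomial.mem_support_iff.1 ha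
    exact hVx a _ ((hUV _ (by rw [map_add, degree_single]; omega)).1 haU)
  · intro hf
    refine ⟨N, fun g hg a ha => ?_⟩
    obtain ⟨b, hb, c, hc, rfl⟩ := Finset.mem_add.1 (MvPolynomial.support_mul f g ha)
    have hNc := (mem_pow_idealOfVars_iff N g).1 hg c hc
    exact (hUV _ (by rw [map_add]; omega)).2 (hV le_self_add (hf hb))

end Monomial

section HilbertFunction

variable (n : ℕ)

def monomialsOfDegree (k : ℕ) : Finset (Fin (n + 1) →₀ ℕ) := univ.finsuppAntidiag k

variable {n}

lemma mem_monomialsOfDegree {k : ℕ} {a : Fin (n + 1) →₀ ℕ} :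
    a ∈ monomialsOfDegree n k ↔ a.degree = k := by
  simp [monomialsOfDegree, mem_finsuppAntidiag, degree_eq_sum]

lemma card_monomialsOfDegree (k : ℕ) : #(monomialsOfDegree n k) = (n + k).choose k := by
  rw [monomialsOfDegree, card_finsuppAntidiag_nat_eq_choose, card_univ, Fintype.card_fin]
  congr 1
  omega

lemma finrank_restrictSupport {σ R : Type*} [CommRing R] [Nontrivial R] (s : Finset (σ →₀ ℕ)) :
    Module.finrank R (restrictSupport R (s : Set (σ →₀ ℕ))) = #s := by
  rw [Module.finrank_eq_nat_card_basis (basisRestrictSupport R _), Nat.card_coe_set_eq,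
    Set.ncard_coe_finset]

lemma coe_monomialsOfDegree (k : ℕ) :
    (monomialsOfDegree n k : Set (Fin (n + 1) →₀ ℕ)) = {a | a.degree = k} := by
  ext a
  exact mem_monomialsOfDegree

lemma coe_filter_monomialsOfDegree (U : Set (Fin (n + 1) →₀ ℕ)) (k : ℕ) :
    (((monomialsOfDegree n k).filter (· ∈ U) : Finset _) : Set (Fin (n + 1) →₀ ℕ)) =
      U ∩ {a | a.degree = k} := by
  ext a
  simp [mem_monomialsOfDegree, and_comm]

lemma idealPiece_restrictSupportIdeal {U : Set (Fin (n + 1) →₀ ℕ)} (hU : IsUpperSet U) (k : ℕ) :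
    idealPiece n (restrictSupportIdeal ℂ U hU) k = restrictSupport ℂ (U ∩ {a | a.degree = k}) := by
  ext f
  rw [idealPiece, restrictScalars_restrictSupportIdeal, homogeneousSubmodule_eq_finsupp_supported,
    Submodule.mem_inf]
  exact Set.subset_inter_iff.symm

lemma isHomog_restrictSupportIdeal {U : Set (Fin (n + 1) →₀ ℕ)} (hU : IsUpperSet U) :
    IsHomog n (restrictSupportIdeal ℂ U hU) := by
  simp_rw [IsHomog, idealPiece_restrictSupportIdeal, restrictScalars_restrictSupportIdeal]
  apply le_antisymm
  · rw [restrictSupport_eq_span, Submodule.span_le]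
    rintro _ ⟨a, ha, rfl⟩
    exact Submodule.mem_iSup_of_mem a.degree (by simp [ha])
  · exact iSup_le fun k => restrictSupport_mono ℂ Set.inter_subset_left

lemma finrank_homogeneousSubmodule (k : ℕ) :
    Module.finrank ℂ (homogeneousSubmodule (Fin (n + 1)) ℂ k) = (n + k).choose k := by
  rw [homogeneousSubmodule_eq_finsupp_supported, ← coe_monomialsOfDegree]
  exact (finrank_restrictSupport _).trans (card_monomialsOfDegree k)

lemma HF_restrictSupportIdeal_compl {C : Set (Fin (n + 1) →₀ ℕ)} (hC : IsLowerSet C) (k : ℕ) :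
    HF n (restrictSupportIdeal ℂ Cᶜ hC.compl) k = #((monomialsOfDegree n k).filter (· ∈ C)) := by
  rw [HF, idealPiece_restrictSupportIdeal, ← coe_filter_monomialsOfDegree,
    finrank_restrictSupport, finrank_homogeneousSubmodule, ← card_monomialsOfDegree,
    ← card_filter_add_card_filter_not (s := monomialsOfDegree n k) (p := (· ∈ C))]
  simp only [Set.mem_compl_iff]
  omega

end HilbertFunction

section Construction

variable (n r : ℕ)

def penult : Fin (n + 1) := ⟨n - 1, by omega⟩

def satGenerators : Set (Fin (n + 1) →₀ ℕ) :=
  {a | ∃ i : Fin (n + 1), (i : ℕ) ≤ n - 2 ∧ a = single i 1} ∪ {single (penult n) r}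

def satExponents : UpperSet (Fin (n + 1) →₀ ℕ) := upperClosure (satGenerators n r)

variable {n r}

lemma mem_satExponents {a : Fin (n + 1) →₀ ℕ} :
    a ∈ satExponents n r ↔ (∃ i : Fin (n + 1), (i : ℕ) ≤ n - 2 ∧ a i ≠ 0) ∨ r ≤ a (penult n) := by
  simp [satExponents, satGenerators, mem_upperClosure, single_le_iff, Nat.one_le_iff_ne_zero,
    or_comm]

lemma span_satGenerators {R : Type*} [CommRing R] :
    Ideal.span ({p | ∃ i : Fin (n + 1), (i : ℕ) ≤ n - 2 ∧ p = X i} ∪ {X (penult n) ^ r}) =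
      restrictSupportIdeal R (satExponents n r) (satExponents n r).upper := by
  rw [satExponents, ← span_monomial_image_eq_restrictSupportIdeal, satGenerators, Set.image_union,
    Set.image_singleton, X_pow_eq_monomial]
  congr
  ext p
  simp [X, eq_comm]

lemma mem_satExponents_of_add_single_last (hn : 1 ≤ n) {a : Fin (n + 1) →₀ ℕ} {j : ℕ}
    (h : a + single (Fin.last n) j ∈ satExponents n r) : a ∈ satExponents n r := by
  have hadd : ∀ i, i ≠ Fin.last n → (a + single (Fin.last n) j) i = a i := fun i hi => by
    simp [Ne.symm hi]
  rw [mem_satExponents] at h ⊢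
  rcases h with ⟨i, hi, hai⟩ | hp
  · refine Or.inl ⟨i, hi, ?_⟩
    rwa [hadd i (by rintro rfl; simp at hi; omega)] at hai
  · refine Or.inr ?_
    rwa [hadd _ (by simp [penult, Fin.ext_iff]; omega)] at hp

lemma eq_of_not_mem_satExponents (hn : 2 ≤ n) {a : Fin (n + 1) →₀ ℕ}
    (h : a ∉ satExponents n r) :
    a = single (penult n) (a (penult n)) + single (Fin.last n) (a (Fin.last n)) := by
  simp only [mem_satExponents, not_or, not_exists, not_and, not_not, not_le] at h
  have hpl : penult n ≠ Fin.last n := by simp [penult, Fin.ext_iff]; omega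
  ext i
  by_cases hip : i = penult n
  · simp [hip, hpl]
  by_cases hil : i = Fin.last n
  · simp [hil, hpl.symm]
  have hi : (i : ℕ) ≤ n - 2 := by
    simp only [penult, Fin.ext_iff, Fin.val_last] at hip hil; omega
  simp [h.1 i hi, Ne.symm hip, Ne.symm hil]

lemma card_filter_not_mem_satExponents (hn : 2 ≤ n) (k : ℕ) :
    #((monomialsOfDegree n k).filter (· ∉ satExponents n r)) = min (k + 1) r := by
  have hpl : penult n ≠ Fin.last n := by simp [penult, Fin.ext_iff]; omega
  rw [← card_range (min (k + 1) r)]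
  refine card_nbij' (· (penult n)) (fun j => single (penult n) j + single (Fin.last n) (k - j))
    ?_ ?_ ?_ ?_
  · intro a ha
    simp only [coe_filter, mem_monomialsOfDegree, Set.mem_ofPred_eq] at ha
    have hr : a (penult n) < r := by
      have := ha.2; rw [mem_satExponents] at this; push Not at this; exact this.2
    simpa [ha.1.symm, hr] using Nat.lt_succ_of_le (le_degree (penult n) a)
  · intro j hj
    simp only [coe_range, Set.mem_Iio, lt_min_iff] at hj
    simp only [coe_filter, mem_monomialsOfDegree, Set.mem_ofPred_eq, map_add, degree_single,
      mem_satExponents, not_or, not_exists, not_and, not_le]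
    refine ⟨by omega, fun i hi => ?_, by simp [hpl, hj.2]⟩
    have hip : i ≠ penult n := by rintro rfl; simp [penult] at hi; omega
    have hil : i ≠ Fin.last n := by rintro rfl; simp at hi; omega
    simp [Ne.symm hip, Ne.symm hil]
  · intro a ha
    simp only [coe_filter, mem_monomialsOfDegree, Set.mem_ofPred_eq] at ha
    have hdecomp := eq_of_not_mem_satExponents hn ha.2
    have hdeg := ha.1
    rw [hdecomp, map_add, degree_single, degree_single] at hdeg
    dsimp only
    rw [show k - a (penult n) = a (Fin.last n) by omega]
    exact hdecomp.symm
  · intro j hj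
    simp [hpl]

variable (n r) in
def threshold : ℕ := sInf {k | r < (n + k).choose k}

lemma monotone_choose_add_self : Monotone fun k => (n + k).choose k := by
  intro k k' h
  simp only [← Nat.choose_symm_add]
  exact Nat.choose_le_choose n (by omega)

lemma lt_choose_sub_two (hn : 2 ≤ n) (hr : 4 ≤ r) : r < (n + (r - 2)).choose (r - 2) := by
  have hr2 : r < r.choose 2 := by
    rw [Nat.choose_two_right, Nat.lt_iff_add_one_le, Nat.le_div_iff_mul_le (by norm_num)]
    obtain ⟨s, rfl⟩ := Nat.exists_eq_add_of_le hr
    rw [show 4 + s - 1 = 3 + s by omega]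
    nlinarith
  calc r < r.choose 2 := hr2
    _ = (2 + (r - 2)).choose (r - 2) := by rw [← Nat.choose_symm_add]; congr 1; omega
    _ ≤ (n + (r - 2)).choose (r - 2) := Nat.choose_le_choose _ (by omega)

lemma threshold_le (hn : 2 ≤ n) (hr : 4 ≤ r) : threshold n r ≤ r - 2 :=
  Nat.sInf_le (lt_choose_sub_two hn hr)

lemma lt_choose_of_threshold_le (hn : 2 ≤ n) (hr : 4 ≤ r) {k : ℕ} (hk : threshold n r ≤ k) :
    r < (n + k).choose k :=
  have : threshold n r ∈ {k | r < (n + k).choose k} := Nat.sInf_mem ⟨_, lt_choose_sub_two hn hr⟩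
  this.trans_le (monotone_choose_add_self hk)

lemma choose_le_of_lt_threshold {k : ℕ} (hk : k < threshold n r) : (n + k).choose k ≤ r :=
  not_lt.1 (Nat.notMem_of_lt_sInf (s := {k | r < (n + k).choose k}) hk)

lemma one_le_threshold (hn : 2 ≤ n) (hr : 4 ≤ r) : 1 ≤ threshold n r := by
  by_contra h
  have := lt_choose_of_threshold_le hn hr (k := 0) (by omega)
  simp at this
  omega

variable (n r) in
def extraPool : Finset (Fin (n + 1) →₀ ℕ) :=
  ((monomialsOfDegree n (threshold n r)).filter (· ∈ satExponents n r)).erase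
    (single 0 (threshold n r))

variable (n r) in
def extraList : List (Fin (n + 1) →₀ ℕ) :=
  (extraPool n r).toList.mergeSort fun u v => v (Fin.last n) ≤ u (Fin.last n)

variable (n r) in
def extra (m : ℕ) : Finset (Fin (n + 1) →₀ ℕ) := ((extraList n r).take m).toFinset

lemma mem_extraPool {u : Fin (n + 1) →₀ ℕ} :
    u ∈ extraPool n r ↔
      u ≠ single 0 (threshold n r) ∧ u.degree = threshold n r ∧ u ∈ satExponents n r := by
  simp [extraPool, mem_monomialsOfDegree]

lemma extra_subset (m : ℕ) : extra n r m ⊆ extraPool n r := fun u hu => by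
  simpa [extra, extraList] using List.mem_of_mem_take (List.mem_toFinset.1 hu)

lemma extra_mono {m m' : ℕ} (h : m ≤ m') : extra n r m ⊆ extra n r m' := fun u hu => by
  simp only [extra, List.mem_toFinset] at hu ⊢
  exact List.take_subset_take_left _ h hu

lemma card_extra {m : ℕ} (hm : m ≤ #(extraPool n r)) : #(extra n r m) = m := by
  have hnodup : (extraList n r).Nodup :=
    (List.mergeSort_perm _ _).nodup_iff.2 (extraPool n r).nodup_toList
  rw [extra, List.toFinset_card_of_nodup (hnodup.sublist (List.take_sublist _ _)),
    List.length_take, extraList, List.length_mergeSort, length_toList]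
  omega

lemma mem_extra_of_lt {m : ℕ} {u v : Fin (n + 1) →₀ ℕ} (hu : u ∈ extra n r m)
    (hv : v ∈ extraPool n r) (huv : u (Fin.last n) < v (Fin.last n)) : v ∈ extra n r m := by
  have hsorted : (extraList n r).Pairwise fun u v => v (Fin.last n) ≤ u (Fin.last n) := by
    simpa [extraList] using List.pairwise_mergeSort (le := fun u v : Fin (n + 1) →₀ ℕ =>
      decide (v (Fin.last n) ≤ u (Fin.last n))) (by simp; omega) (by simp; omega)
      (extraPool n r).toList
  simp only [extra, List.mem_toFinset] at hu ⊢
  have hvL : v ∈ extraList n r := by simpa [extraList] using hv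
  rw [← List.take_append_drop m (extraList n r), List.mem_append] at hvL
  refine hvL.resolve_right fun hvd => ?_
  exact absurd (hsorted.rel_of_mem_take_of_mem_drop hu hvd) (not_le.2 huv)

lemma card_extraPool (hn : 2 ≤ n) (hr : 4 ≤ r) :
    #(extraPool n r) + (threshold n r + 2) = (n + threshold n r).choose (threshold n r) := by
  have hd := one_le_threshold hn hr
  have hmem : single 0 (threshold n r) ∈
      (monomialsOfDegree n (threshold n r)).filter (· ∈ satExponents n r) := by
    simp only [mem_filter, mem_monomialsOfDegree, degree_single, mem_satExponents, true_and]
    exact Or.inl ⟨0, by simp, by simp; omega⟩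
  have hsplit := card_filter_add_card_filter_not (s := monomialsOfDegree n (threshold n r))
    (p := (· ∈ satExponents n r))
  rw [card_filter_not_mem_satExponents hn, card_monomialsOfDegree,
    min_eq_left (by have := threshold_le hn hr; omega)] at hsplit
  rw [extraPool, card_erase_of_mem hmem]
  have := card_pos.2 ⟨_, hmem⟩
  omega

variable (n r) in
def stdMonomials : Set (Fin (n + 1) →₀ ℕ) :=
  {a | a.degree < threshold n r ∨ a ∉ satExponents n r ∨ (∃ j ≤ r - 2, a = single 0 j) ∨
    ∃ u ∈ extra n r (r - 2 - a.degree), a = u + single (Fin.last n) (a.degree - threshold n r)}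

lemma exists_extra_of_le (hn : 1 ≤ n) {m e : ℕ} {a u : Fin (n + 1) →₀ ℕ}
    (hu : u ∈ extra n r m) (hau : a ≤ u + single (Fin.last n) e)
    (hda : threshold n r ≤ a.degree) (ha : a ∈ satExponents n r) :
    ∃ v ∈ extra n r m, a = v + single (Fin.last n) (a.degree - threshold n r) := by
  obtain ⟨-, hud, -⟩ := mem_extraPool.1 (extra_subset m hu)
  have hoff : ∀ i, i ≠ Fin.last n → a i ≤ u i := fun i hi => by
    simpa [Ne.symm hi] using hau i
  have herase : (a.erase (Fin.last n)).degree ≤ threshold n r := by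
    rw [← hud]
    refine degree_mono fun i => ?_
    rw [erase_apply]
    split_ifs with h
    exacts [zero_le, hoff i h]
  have hal : a.degree - threshold n r ≤ a (Fin.last n) := by
    have := degree_erase_add a (Fin.last n); omega
  obtain ⟨v, hv⟩ : ∃ v, a = v + single (Fin.last n) (a.degree - threshold n r) :=
    ⟨_, (tsub_add_cancel_of_le (single_le_iff.2 hal)).symm⟩
  refine ⟨v, ?_, hv⟩
  -- Either `v = u`, or `v` has a larger exponent of `X (Fin.last n)` than `u`, hence comes
  -- earlier in `extraList`.
  have hvd : v.degree = threshold n r := by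
    have := congrArg degree hv; rw [map_add, degree_single] at this; omega
  have hva : ∀ i, i ≠ Fin.last n → v i = a i := fun i hi => by
    rw [hv]; simp [Ne.symm hi]
  by_cases hvl : u (Fin.last n) < v (Fin.last n)
  · refine mem_extra_of_lt hu (mem_extraPool.2 ⟨?_, hvd, ?_⟩) hvl
    · rintro rfl
      have h0l : (0 : Fin (n + 1)) ≠ Fin.last n := by simp [Fin.ext_iff]; omega
      simp [h0l] at hvl
    · exact mem_satExponents_of_add_single_last hn (hv ▸ ha)
  · have hvu : v ≤ u := fun i => by
      by_cases hi : i = Fin.last n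
      · subst hi; omega
      · rw [hva i hi]; exact hoff i hi
    rwa [eq_of_le_of_degree_eq hvu (hvd.trans hud.symm)]

lemma isLowerSet_stdMonomials (hn : 1 ≤ n) : IsLowerSet (stdMonomials n r) := by
  intro b a hab hb
  by_cases hda : a.degree < threshold n r
  · exact Or.inl hda
  by_cases has : a ∈ satExponents n r
  swap
  · exact Or.inr (Or.inl has)
  right; right
  rcases hb with hdb | hbs | ⟨j, hj, rfl⟩ | ⟨u, hu, hbu⟩
  · exact absurd ((degree_mono hab).trans_lt hdb) hda
  · exact absurd ((satExponents n r).upper hab has) hbs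
  · refine Or.inl ⟨a 0, (by simpa using hab 0 : a 0 ≤ j).trans hj, ?_⟩
    exact support_subset_singleton.1 ((support_mono hab).trans support_single_subset)
  · obtain ⟨v, hv, hav⟩ := exists_extra_of_le hn hu (hbu ▸ hab) (not_lt.1 hda) has
    exact Or.inr ⟨v, extra_mono (by have := degree_mono hab; omega) hv, hav⟩

lemma mem_stdMonomials_iff_of_sub_one_le_degree (hn : 2 ≤ n) (hr : 4 ≤ r)
    {a : Fin (n + 1) →₀ ℕ} (ha : r - 1 ≤ a.degree) :
    a ∈ stdMonomials n r ↔ a ∉ satExponents n r := by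
  have hd := threshold_le hn hr
  refine ⟨?_, fun h => Or.inr (Or.inl h)⟩
  rintro (hda | has | ⟨j, hj, rfl⟩ | ⟨u, hu, -⟩)
  · omega
  · exact has
  · rw [degree_single] at ha; omega
  · rw [show r - 2 - a.degree = 0 by omega] at hu
    simp [extra] at hu

lemma filter_stdMonomials_filter_mem_satExponents (hn : 2 ≤ n) (hr : 4 ≤ r) {k : ℕ}
    (hdk : threshold n r ≤ k) (hkr : k ≤ r - 2) :
    ((monomialsOfDegree n k).filter (· ∈ stdMonomials n r)).filter (· ∈ satExponents n r) =
      insert (single 0 k) ((extra n r (r - 2 - k)).map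
        (addRightEmbedding (single (Fin.last n) (k - threshold n r)))) := by
  have hd := one_le_threshold hn hr
  ext a
  simp only [mem_filter, mem_monomialsOfDegree, mem_insert, mem_map, addRightEmbedding_apply]
  constructor
  · rintro ⟨⟨rfl, hda | has | ⟨j, hj, rfl⟩ | ⟨u, hu, hau⟩⟩, has'⟩
    · omega
    · exact absurd has' has
    · simp
    · exact Or.inr ⟨u, hu, hau.symm⟩
  · rintro (rfl | ⟨u, hu, rfl⟩)
    · refine ⟨⟨degree_single _ _, Or.inr (Or.inr (Or.inl ⟨k, hkr, by simp⟩))⟩, ?_⟩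
      exact mem_satExponents.2 (Or.inl ⟨0, by simp, by simp; omega⟩)
    · obtain ⟨-, hud, hus⟩ := mem_extraPool.1 (extra_subset _ hu)
      have hdeg : (u + single (Fin.last n) (k - threshold n r)).degree = k := by
        rw [map_add, degree_single]; omega
      refine ⟨⟨hdeg, Or.inr (Or.inr (Or.inr ⟨u, by rwa [hdeg], by rw [hdeg]⟩))⟩, ?_⟩
      exact (satExponents n r).upper le_self_add hus

lemma card_filter_stdMonomials_of_threshold_le (hn : 2 ≤ n) (hr : 4 ≤ r) {k : ℕ}
    (hdk : threshold n r ≤ k) (hkr : k ≤ r - 2) :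
    #((monomialsOfDegree n k).filter (· ∈ stdMonomials n r)) = r := by
  have hnotin : single 0 k ∉ (extra n r (r - 2 - k)).map
      (addRightEmbedding (single (Fin.last n) (k - threshold n r))) := by
    simp only [mem_map, addRightEmbedding_apply, not_exists, not_and]
    intro u hu hu0
    obtain ⟨hne, hud, -⟩ := mem_extraPool.1 (extra_subset _ hu)
    have h0l : (0 : Fin (n + 1)) ≠ Fin.last n := by simp [Fin.ext_iff]; omega
    have := congrArg (· (Fin.last n)) hu0
    simp only [Finsupp.add_apply, single_eq_same, single_apply, h0l, if_false] at this
    have hkd : k = threshold n r := by omega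
    subst hkd
    simp at hu0
    exact hne hu0
  have hm : r - 2 - k ≤ #(extraPool n r) := by
    have := card_extraPool hn hr
    have := lt_choose_of_threshold_le hn hr le_rfl
    omega
  have hsplit := card_filter_add_card_filter_not
    (s := (monomialsOfDegree n k).filter (· ∈ stdMonomials n r)) (p := (· ∈ satExponents n r))
  rw [filter_stdMonomials_filter_mem_satExponents hn hr hdk hkr, card_insert_of_notMem hnotin,
    card_map, card_extra hm, filter_filter] at hsplit
  have hnotsat : (monomialsOfDegree n k).filter (fun a => a ∈ stdMonomials n r ∧
      a ∉ satExponents n r) = (monomialsOfDegree n k).filter (· ∉ satExponents n r) :=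
    filter_congr fun a _ => and_iff_right_of_imp fun h => Or.inr (Or.inl h)
  rw [← hsplit, hnotsat, card_filter_not_mem_satExponents hn]
  omega

lemma card_filter_stdMonomials (hn : 2 ≤ n) (hr : 4 ≤ r) (k : ℕ) :
    #((monomialsOfDegree n k).filter (· ∈ stdMonomials n r)) = min ((n + k).choose k) r := by
  rcases lt_or_ge k (threshold n r) with hkd | hdk
  · have hall : ∀ a ∈ monomialsOfDegree n k, a ∈ stdMonomials n r := fun a ha =>
      Or.inl (by rw [mem_monomialsOfDegree.1 ha]; exact hkd)
    rw [filter_true_of_mem hall,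
      card_monomialsOfDegree, min_eq_left (choose_le_of_lt_threshold hkd)]
  rw [min_eq_right (lt_choose_of_threshold_le hn hr hdk).le]
  rcases le_or_gt k (r - 2) with hkr | hkr
  · exact card_filter_stdMonomials_of_threshold_le hn hr hdk hkr
  · rw [filter_congr fun a ha => mem_stdMonomials_iff_of_sub_one_le_degree hn hr
      (by rw [mem_monomialsOfDegree.1 ha]; omega), card_filter_not_mem_satExponents hn]
    omega

end Construction

end NonslipIdeal

open NonslipIdeal in
/-- For `n ≥ 2`, `r ≥ 4` there is a homogeneous ideal `I` with Hilbert function of `S/I` equal to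
`min(dim S_k, r)`, with saturation `(α_0,…,α_{n−2},α_{n−1}^r)`, and with `α_0^{r−2} ∉ I`. -/
theorem exists_nonslip_ideal (n r : ℕ) (hn : 2 ≤ n) (hr : 4 ≤ r) :
    ∃ I : Ideal (MvPolynomial (Fin (n + 1)) ℂ),
      IsHomog n I ∧
      (∀ k : ℕ, HF n I k = min (Module.finrank ℂ ↥(homogeneousSubmodule (Fin (n + 1)) ℂ k)) r) ∧
      satSet I (irrel n) =
        ((Ideal.span ({p | ∃ i : Fin (n + 1), (i : ℕ) ≤ n - 2 ∧ p = X i} ∪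
            {(X (⟨n - 1, by omega⟩ : Fin (n + 1)))^r}) :
          Ideal (MvPolynomial (Fin (n + 1)) ℂ)) : Set (MvPolynomial (Fin (n + 1)) ℂ)) ∧
      (X (0 : Fin (n + 1)))^(r - 2) ∉ I := by
  have hstd := isLowerSet_stdMonomials (r := r) (by omega : 1 ≤ n)
  refine ⟨restrictSupportIdeal ℂ (stdMonomials n r)ᶜ hstd.compl,
    isHomog_restrictSupportIdeal _, fun k => ?_, ?_, ?_⟩
  · rw [HF_restrictSupportIdeal_compl hstd, finrank_homogeneousSubmodule]
    exact card_filter_stdMonomials hn hr k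
  · refine (satSet_restrictSupportIdeal _ (satExponents n r).upper (r - 1) (Fin.last n)
      (fun a ha => ?_) (fun a j => mem_satExponents_of_add_single_last (by omega))).trans
      (congrArg SetLike.coe span_satGenerators.symm)
    rw [Set.mem_compl_iff, mem_stdMonomials_iff_of_sub_one_le_degree hn hr ha, not_not]
    rfl
  · rw [mem_restrictSupportIdeal, X_pow_eq_monomial, support_monomial, if_neg one_ne_zero,
      Finset.coe_singleton, Set.singleton_subset_iff, Set.mem_compl_iff, not_not]
    exact Or.inr (Or.inr (Or.inl ⟨r - 2, le_rfl, rfl⟩))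
end
end
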